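/- arXiv:1406.5422 — 4 statements merged into one kernel-verified Lean document; each statement's English description precedes it below -/
import Mathlib

section
/- For every γ > 0 and every x ∈ (0, e^γ − 1], the quantity −(ln(1+x) − γ)/√(x(x+2)/(1+x)²) is bounded below by (γ/√(e^{2γ}−1))·(√((e^γ−1)/x) − 1). -/
/-!
Put `u = 1 + x` and `X = e^γ - 1`, so `1 < u ≤ e^γ`. Since `t ↦ t log t` is convex, on `[1, e^γ]` it lies
below its chord, which gives `u (γ - log u) ≥ γ (X - x) / X`. The rest is algebra with square roots:
`X - x = (√X - √x)(√X + √x)` and `√(x + 2) ≤ √(X + 2)`.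
-/

open Real Set

lemma mul_log_mul_sub_one_le {u b : ℝ} (h1u : 1 ≤ u) (hub : u ≤ b) :
    u * log u * (b - 1) ≤ (u - 1) * (b * log b) := by
  rcases h1u.eq_or_lt with rfl | h1u
  · simp
  rcases hub.eq_or_lt with rfl | hub
  · exact le_of_eq (by ring)
  have hchord := convexOn_mul_log.secant_mono_aux1 (mem_Ici.2 zero_le_one)
    (mem_Ici.2 (by linarith)) h1u hub
  simp only [log_one, mul_zero] at hchord
  linarith

lemma sqrt_div_sub_one_div_le {x X : ℝ} (hx : 0 < x) (hxX : x ≤ X) :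
    (√(X / x) - 1) / √(X * (X + 2)) ≤ (X - x) / (X * √(x * (x + 2))) := by
  obtain ⟨p, hp, rfl⟩ : ∃ p, 0 < p ∧ x = p ^ 2 := ⟨√x, sqrt_pos.2 hx, (sq_sqrt hx.le).symm⟩
  obtain ⟨P, hP, rfl⟩ : ∃ P, 0 < P ∧ X = P ^ 2 :=
    ⟨√X, sqrt_pos.2 (hx.trans_le hxX), (sq_sqrt (hx.trans_le hxX).le).symm⟩
  have hpP : p ≤ P := (pow_le_pow_iff_left₀ hp.le hP.le two_ne_zero).1 hxX
  have hq := sqrt_pos.2 (by positivity : 0 < p ^ 2 + 2)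
  have hqQ : √(p ^ 2 + 2) ≤ √(P ^ 2 + 2) := sqrt_le_sqrt (by linarith)
  rw [sqrt_div' _ (by positivity), sqrt_mul (by positivity), sqrt_mul (by positivity),
    sqrt_sq hp.le, sqrt_sq hP.le, div_sub_one hp.ne', div_div,
    div_le_div_iff₀ (by positivity) (by positivity)]
  calc (P - p) * (P ^ 2 * (p * √(p ^ 2 + 2)))
      = (P - p) * (p * P) * (P * √(p ^ 2 + 2)) := by ring
    _ ≤ (P - p) * (p * P) * ((P + p) * √(P ^ 2 + 2)) := by
        gcongr
        nlinarith
    _ = (P ^ 2 - p ^ 2) * (p * (P * √(P ^ 2 + 2))) := by ring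

theorem capacity_gap_lower_bound_general (γ x : ℝ)
    (hx : x ∈ Set.Ioc 0 (Real.exp γ - 1)) :
    -(Real.log (1 + x) - γ) / Real.sqrt (x * (x + 2) / (1 + x) ^ 2) ≥
      γ / Real.sqrt (Real.exp (2 * γ) - 1) *
        (Real.sqrt ((Real.exp γ - 1) / x) - 1) := by
  obtain ⟨hx0, hxX⟩ := hx
  have hγ : 0 ≤ γ := (one_lt_exp_iff.1 (by linarith)).le
  have hchord := mul_log_mul_sub_one_le (by linarith : 1 ≤ 1 + x) (by linarith : 1 + x ≤ exp γ)
  rw [log_exp] at hchord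
  have hV : √(x * (x + 2) / (1 + x) ^ 2) = √(x * (x + 2)) / (1 + x) := by
    rw [sqrt_div' _ (by positivity), sqrt_sq (by linarith)]
  have hE : exp (2 * γ) - 1 = (exp γ - 1) * (exp γ - 1 + 2) := by
    rw [two_mul, exp_add]; ring
  set X := exp γ - 1
  rw [ge_iff_le, hV, hE]
  calc γ / √(X * (X + 2)) * (√(X / x) - 1) = γ * ((√(X / x) - 1) / √(X * (X + 2))) := by ring
    _ ≤ γ * ((X - x) / (X * √(x * (x + 2)))) :=
        mul_le_mul_of_nonneg_left (sqrt_div_sub_one_div_le hx0 hxX) hγ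
    _ = γ * (X - x) / X / √(x * (x + 2)) := by rw [div_div, mul_div_assoc]
    _ ≤ (1 + x) * (γ - log (1 + x)) / √(x * (x + 2)) := by
        gcongr
        rw [div_le_iff₀ (by linarith)]
        linear_combination hchord
    _ = -(log (1 + x) - γ) / (√(x * (x + 2)) / (1 + x)) := by
        field_simp
        ring

/-- Lower bound on the normalized capacity gap `-(C(x)-γ)/√V(x)` with
`C(x) = ln(1+x)` and `V(x) = x(x+2)/(1+x)²`, for `x ∈ (0, e^γ - 1]`. -/
theorem capacity_gap_lower_bound (γ x : ℝ) (hγ : 0 < γ)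
    (hx : x ∈ Set.Ioc 0 (Real.exp γ - 1)) :
    -(Real.log (1 + x) - γ) / Real.sqrt (x * (x + 2) / (1 + x) ^ 2) ≥
      γ / Real.sqrt (Real.exp (2 * γ) - 1) *
        (Real.sqrt ((Real.exp γ - 1) / x) - 1) :=
  capacity_gap_lower_bound_general γ x hx
end

section
/- For γ > 0 and n ≥ 2π(e^{2γ}−1)/γ² and x ∈ (0, e^γ−1), one has (1/2)·x/(e^γ−1) ≥ Q(√(2π)·(√((e^γ−1)/x) − 1)) where Q is the Gaussian Q-function, with equality when x = e^γ−1. -/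
open MeasureTheory Real

/-- The Gaussian Q-function. -/
noncomputable def gaussQ (x : ℝ) : ℝ :=
  (Real.sqrt (2 * Real.pi))⁻¹ * ∫ t in Set.Ioi x, Real.exp (-t ^ 2 / 2)

/-!
Write `s = √((e^γ - 1) / x) = 1 + u` with `u ≥ 0`; the claim becomes `Q(√(2π) u) ≤ 1 / (2 (1 + u)²)`.
For `π u ≥ 2` the Mills-ratio bound `Q(a) ≤ e^{-a²/2} / (√(2π) a)` gives `Q(√(2π) u) ≤ e^{-π u²} / (2π u)`,
and `(1 + u)² e^{-π u²} ≤ e^{u (2 - π u)} ≤ 1`. For `π u ≤ 2`, integrating `e^{-t²/2} ≥ 1 - t²/2` gives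
`Q(√(2π) u) ≤ 1/2 - u + π u³ / 3`, which lies below `1 / (2 (1 + u)²)` as long as `u ≤ 2/3`.
-/

lemma neg_sq_div_two_eq (t : ℝ) : -t ^ 2 / 2 = -(1 / 2) * t ^ 2 := by ring

lemma integrable_exp_neg_sq_div_two : Integrable fun t : ℝ ↦ exp (-t ^ 2 / 2) := by
  simpa only [neg_sq_div_two_eq] using integrable_exp_neg_mul_sq (b := 1 / 2) (by norm_num)

lemma integrable_mul_exp_neg_sq_div_two : Integrable fun t : ℝ ↦ t * exp (-t ^ 2 / 2) := by
  simpa only [neg_sq_div_two_eq] using integrable_mul_exp_neg_mul_sq (b := 1 / 2) (by norm_num)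

lemma integral_Ioi_mul_exp_neg_sq_div_two (a : ℝ) :
    ∫ t in Set.Ioi a, t * exp (-t ^ 2 / 2) = exp (-a ^ 2 / 2) := by
  have hderiv (t : ℝ) : HasDerivAt (fun t ↦ -exp (-t ^ 2 / 2)) (t * exp (-t ^ 2 / 2)) t := by
    have hexponent : HasDerivAt (fun t : ℝ ↦ -t ^ 2 / 2) (-t) t := by
      simpa [neg_div] using ((hasDerivAt_pow 2 t).div_const 2).fun_neg
    exact hexponent.exp.fun_neg.congr_deriv (by ring)
  have hlim : Filter.Tendsto (fun t : ℝ ↦ -exp (-t ^ 2 / 2)) Filter.atTop (nhds 0) := by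
    simpa only [neg_sq_div_two_eq, neg_zero, Function.comp_def] using
      (tendsto_exp_atBot.comp ((Filter.tendsto_pow_atTop two_ne_zero).const_mul_atTop_of_neg
        (by norm_num : -(1 / 2 : ℝ) < 0))).neg
  rw [integral_Ioi_of_hasDerivAt_of_tendsto' (fun t _ ↦ hderiv t)
    integrable_mul_exp_neg_sq_div_two.integrableOn hlim]
  ring

lemma integral_Ioi_exp_neg_sq_div_two_le {a : ℝ} (ha : 0 < a) :
    ∫ t in Set.Ioi a, exp (-t ^ 2 / 2) ≤ exp (-a ^ 2 / 2) / a := by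
  rw [← integral_Ioi_mul_exp_neg_sq_div_two, ← integral_div]
  refine setIntegral_mono_on integrable_exp_neg_sq_div_two.integrableOn
    (integrable_mul_exp_neg_sq_div_two.div_const a).integrableOn measurableSet_Ioi fun t ht ↦ ?_
  rw [mul_div_right_comm]
  exact le_mul_of_one_le_left (exp_pos _).le ((one_le_div ha).2 (le_of_lt ht))

lemma gaussQ_le_exp_div {a : ℝ} (ha : 0 < a) :
    gaussQ a ≤ exp (-a ^ 2 / 2) / (√(2 * π) * a) := by
  rw [gaussQ, inv_mul_eq_div, mul_comm √(2 * π), ← div_div]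
  exact div_le_div_of_nonneg_right (integral_Ioi_exp_neg_sq_div_two_le ha) (by positivity)

lemma gaussQ_eq_half_sub (a : ℝ) :
    gaussQ a = 1 / 2 - (√(2 * π))⁻¹ * ∫ t in 0..a, exp (-t ^ 2 / 2) := by
  have hhalf : ∫ t in Set.Ioi 0, exp (-t ^ 2 / 2) = √(2 * π) / 2 := by
    simp only [neg_sq_div_two_eq, integral_gaussian_Ioi]
    congr 2; ring
  have hsplit := intervalIntegral.integral_interval_add_Ioi
    integrable_exp_neg_sq_div_two.integrableOn integrable_exp_neg_sq_div_two.integrableOn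
    (a := 0) (b := a) (μ := volume)
  have hc : √(2 * π) ≠ 0 := by positivity
  rw [gaussQ, eq_sub_iff_add_eq, ← mul_add, add_comm, hsplit, hhalf]
  field_simp

lemma sub_cube_div_six_le_integral_exp_neg_sq_div_two {a : ℝ} (ha : 0 ≤ a) :
    a - a ^ 3 / 6 ≤ ∫ t in 0..a, exp (-t ^ 2 / 2) := by
  have hpoly : ∫ t in 0..a, (1 - t ^ 2 / 2) = a - a ^ 3 / 6 := by
    rw [intervalIntegral.integral_sub intervalIntegrable_const
      ((intervalIntegral.intervalIntegrable_pow 2).div_const 2), intervalIntegral.integral_const,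
      intervalIntegral.integral_div, integral_pow, smul_eq_mul]
    ring
  rw [← hpoly]
  refine intervalIntegral.integral_mono_on ha (Continuous.intervalIntegrable (by fun_prop) _ _)
    (Continuous.intervalIntegrable (by fun_prop) _ _) fun t _ ↦ ?_
  linarith [add_one_le_exp (-t ^ 2 / 2)]

lemma gaussQ_sqrt_two_pi_mul_le_of_two_le {u : ℝ} (hu : 2 ≤ π * u) :
    gaussQ (√(2 * π) * u) ≤ 1 / (2 * (1 + u) ^ 2) := by
  have hu0 : 0 < u := pos_of_mul_pos_right (by linarith) pi_pos.le
  have hsq : (√(2 * π) * u) ^ 2 = 2 * π * u ^ 2 := by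
    rw [mul_pow, sq_sqrt (by positivity)]
  have hexp : (1 + u) ^ 2 * exp (-(π * u ^ 2)) ≤ 1 :=
    calc (1 + u) ^ 2 * exp (-(π * u ^ 2)) ≤ exp u ^ 2 * exp (-(π * u ^ 2)) := by
          gcongr
          linarith [add_one_le_exp u]
      _ = exp (u * (2 - π * u)) := by rw [← exp_nat_mul, ← exp_add]; ring_nf
      _ ≤ 1 := exp_le_one_iff.2 (mul_nonpos_of_nonneg_of_nonpos hu0.le (by linarith))
  calc gaussQ (√(2 * π) * u) ≤ exp (-(√(2 * π) * u) ^ 2 / 2) / (√(2 * π) * (√(2 * π) * u)) :=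
        gaussQ_le_exp_div (by positivity)
    _ = exp (-(π * u ^ 2)) / (2 * π * u) := by
        rw [hsq, ← mul_assoc, mul_self_sqrt (by positivity)]; ring_nf
    _ ≤ 1 / (2 * (1 + u) ^ 2) := by
        rw [div_le_div_iff₀ (by positivity) (by positivity)]
        linarith

lemma gaussQ_sqrt_two_pi_mul_le_of_le_two {u : ℝ} (hu0 : 0 ≤ u) (hu : π * u ≤ 2) :
    gaussQ (√(2 * π) * u) ≤ 1 / (2 * (1 + u) ^ 2) := by
  set c := √(2 * π)
  have hc : 0 < c := by positivity
  have hQ : gaussQ (c * u) ≤ 1 / 2 - u + π * u ^ 3 / 3 := by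
    have hcube : c⁻¹ * (c * u - (c * u) ^ 3 / 6) = u - π * u ^ 3 / 3 := by
      rw [mul_pow, show c ^ 3 = c * c ^ 2 by ring, sq_sqrt (by positivity)]
      field_simp
      ring
    rw [gaussQ_eq_half_sub]
    have := mul_le_mul_of_nonneg_left
      (sub_cube_div_six_le_integral_exp_neg_sq_div_two (by positivity : 0 ≤ c * u))
      (inv_nonneg.2 hc.le)
    linarith
  have hu23 : u ≤ 2 / 3 := by nlinarith [pi_gt_three]
  have hk : 2 * π * u * (1 + u) ^ 2 ≤ 9 + 6 * u := by
    nlinarith [mul_le_mul_of_nonneg_right hu (sq_nonneg (1 + u))]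
  rw [le_div_iff₀ (by positivity)]
  nlinarith [mul_nonneg (sq_nonneg u) (sub_nonneg.2 hk)]

lemma gaussQ_sqrt_two_pi_mul_le {u : ℝ} (hu : 0 ≤ u) :
    gaussQ (√(2 * π) * u) ≤ 1 / (2 * (1 + u) ^ 2) :=
  (le_total (π * u) 2).elim (gaussQ_sqrt_two_pi_mul_le_of_le_two hu)
    gaussQ_sqrt_two_pi_mul_le_of_two_le

theorem chord_ge_gaussQ_term_general (γ : ℝ) (hγ : 0 < γ) :
    (∀ x ∈ Set.Ioo 0 (Real.exp γ - 1),
        (1 / 2) * x / (Real.exp γ - 1) ≥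
          gaussQ (Real.sqrt (2 * Real.pi) *
            (Real.sqrt ((Real.exp γ - 1) / x) - 1))) ∧
      (1 / 2) * (Real.exp γ - 1) / (Real.exp γ - 1) =
        gaussQ (Real.sqrt (2 * Real.pi) *
          (Real.sqrt ((Real.exp γ - 1) / (Real.exp γ - 1)) - 1)) := by
  have hE : 0 < exp γ - 1 := sub_pos.2 (one_lt_exp_iff.2 hγ)
  refine ⟨fun x ⟨hx0, hxE⟩ ↦ ?_, ?_⟩
  · have hs : 1 ≤ √((exp γ - 1) / x) := one_le_sqrt.2 ((one_le_div hx0).2 hxE.le)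
    have hQ := gaussQ_sqrt_two_pi_mul_le (sub_nonneg.2 hs)
    rw [add_sub_cancel, sq_sqrt (by positivity)] at hQ
    rw [ge_iff_le]
    convert hQ using 1
    field_simp
  · rw [mul_div_assoc, div_self hE.ne', sqrt_one, sub_self, mul_zero, gaussQ_eq_half_sub,
      intervalIntegral.integral_same]
    ring

theorem chord_ge_gaussQ_term (n γ : ℝ) (hγ : 0 < γ)
    (hn : n ≥ 2 * Real.pi * (Real.exp (2 * γ) - 1) / γ ^ 2) :
    (∀ x ∈ Set.Ioo 0 (Real.exp γ - 1),
        (1 / 2) * x / (Real.exp γ - 1) ≥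
          gaussQ (Real.sqrt (2 * Real.pi) *
            (Real.sqrt ((Real.exp γ - 1) / x) - 1))) ∧
      (1 / 2) * (Real.exp γ - 1) / (Real.exp γ - 1) =
        gaussQ (Real.sqrt (2 * Real.pi) *
          (Real.sqrt ((Real.exp γ - 1) / (Real.exp γ - 1)) - 1)) :=
  chord_ge_gaussQ_term_general γ hγ
end

section
/- Consider M ≥ 1 codewords c_1 ≤ … ≤ c_M in [0,∞) with (1/M)·Σ_j c_j ≤ ρ, used over the channel U = ln(1+c) + ln(Σ_{i=1}^n |Z_i|²) − ln n with Z_i i.i.d. CN(0,1). The average probability of successful maximum-likelihood decoding satisfies 1 − ε' ≤ (1/M)·(1 + √(n/(2π))·ln(1 + M·ρ)). -/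
/-!
Each output density is a translate `q(u | c) = f (u - log (1 + c))` of the density `f` of `log X`
for `X ~ Γ(n, n)`; `f` is unimodal at `0` and, by Stirling's bound on `(n - 1)!`, bounded by
`√(n / (2π))`. All shifts `log (1 + c j)` lie in `[0, log (1 + M ρ)]`, so every translate lies
below the envelope made of the left tail of `f`, the plateau `√(n / (2π))` over that interval and
the right tail of `f` shifted to its end. As the decoding sets are disjoint, the summed success
masses are at most the integral of the envelope, `1 + √(n / (2π)) log (1 + M ρ)`.
-/

open MeasureTheory Real

/-- The output density of the logarithmic channel `U = ln(1+c) + ln(∑|Zᵢ|²) - ln n`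
given input power `c`:
`q(u|c) = nⁿ exp(nu - n eᵘ/(1+c)) / ((1+c)ⁿ (n-1)!)`. -/
noncomputable def outDensity (n : ℕ) (c u : ℝ) : ℝ :=
  (n : ℝ) ^ n * Real.exp (n * u - n * Real.exp u / (1 + c)) /
    ((1 + c) ^ n * (Nat.factorial (n - 1) : ℝ))

open Set Nat

theorem sum_indicator_le_of_pairwise_disjoint {ι α : Type*} [Fintype ι] {D : ι → Set α}
    (hD : Pairwise (Function.onFun Disjoint D)) {f : ι → α → ℝ} {h : α → ℝ} {x : α}
    (hf : ∀ j, f j x ≤ h x) (h0 : 0 ≤ h x) : ∑ j, (D j).indicator (f j) x ≤ h x := by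
  by_cases hx : ∃ k, x ∈ D k
  · obtain ⟨k, hk⟩ := hx
    rw [Finset.sum_eq_single k (fun j _ hjk => indicator_of_notMem
      (fun hj => (hD hjk).ne_of_mem hj hk rfl) _) (by simp), indicator_of_mem hk]
    exact hf k
  · push Not at hx
    simpa [indicator_of_notMem (hx _)] using h0

section ShiftEnvelope

variable {g : ℝ → ℝ} {B a b : ℝ}

noncomputable def shiftEnvelope (g : ℝ → ℝ) (B a b : ℝ) (u : ℝ) : ℝ :=
  (Iic 0).indicator g (u - a) + (Ioc a b).indicator (fun _ => B) u + (Ioi 0).indicator g (u - b)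

theorem comp_sub_le_shiftEnvelope (hgB : ∀ t, g t ≤ B) (hmono : MonotoneOn g (Iic 0))
    (hanti : AntitoneOn g (Ici 0)) {s : ℝ} (hs : s ∈ Icc a b) (u : ℝ) :
    g (u - s) ≤ shiftEnvelope g B a b u := by
  obtain ⟨has, hsb⟩ := hs
  rcases le_or_gt u a with hua | hau
  · have hub : u ≤ b := by linarith
    simpa [shiftEnvelope, hua, hub.not_gt] using
      hmono (mem_Iic.2 (by linarith) : u - s ∈ Iic 0) (mem_Iic.2 (by linarith) : u - a ∈ Iic 0)
        (by linarith : u - s ≤ u - a)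
  rcases le_or_gt u b with hub | hbu
  · simpa [shiftEnvelope, hau, hub, hau.not_ge] using hgB (u - s)
  · simpa [shiftEnvelope, hau.not_ge, hbu, hbu.not_ge] using
      hanti (mem_Ici.2 (by linarith) : u - b ∈ Ici 0) (mem_Ici.2 (by linarith) : u - s ∈ Ici 0)
        (by linarith : u - b ≤ u - s)

theorem shiftEnvelope_nonneg (hg : 0 ≤ g) (hB : 0 ≤ B) (u : ℝ) :
    0 ≤ shiftEnvelope g B a b u :=
  add_nonneg
    (add_nonneg (indicator_nonneg (fun t _ => hg t) _) (indicator_nonneg (fun _ _ => hB) _))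
    (indicator_nonneg (fun t _ => hg t) _)

theorem integrable_shiftEnvelope (hg : Integrable g) : Integrable (shiftEnvelope g B a b) := by
  have hmid : Integrable ((Ioc a b).indicator fun _ => B) :=
    (integrable_indicator_iff measurableSet_Ioc).2 (integrableOn_const measure_Ioc_lt_top.ne)
  exact ((hg.indicator measurableSet_Iic).comp_sub_right a |>.add hmid).add
    ((hg.indicator measurableSet_Ioi).comp_sub_right b)

theorem integral_shiftEnvelope (hg : Integrable g) (hab : a ≤ b) :
    ∫ u, shiftEnvelope g B a b u = (∫ t, g t) + B * (b - a) := by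
  have hleft : Integrable fun u => (Iic 0).indicator g (u - a) :=
    (hg.indicator measurableSet_Iic).comp_sub_right a
  have hright : Integrable fun u => (Ioi 0).indicator g (u - b) :=
    (hg.indicator measurableSet_Ioi).comp_sub_right b
  have hmid : Integrable ((Ioc a b).indicator fun _ => B) :=
    (integrable_indicator_iff measurableSet_Ioc).2 (integrableOn_const measure_Ioc_lt_top.ne)
  have hleftmid : Integrable fun u =>
      (Iic 0).indicator g (u - a) + (Ioc a b).indicator (fun _ => B) u := hleft.add hmid
  unfold shiftEnvelope
  rw [integral_add hleftmid hright, integral_add hleft hmid, integral_sub_right_eq_self,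
    integral_sub_right_eq_self, integral_indicator measurableSet_Iic,
    integral_indicator measurableSet_Ioc, integral_indicator measurableSet_Ioi, setIntegral_const,
    volume_real_Ioc_of_le hab, smul_eq_mul]
  linarith [intervalIntegral.integral_Iic_add_Ioi (b := 0) hg.integrableOn hg.integrableOn]

theorem sum_setIntegral_comp_sub_le (hg0 : 0 ≤ g) (hg : Integrable g) (hgB : ∀ t, g t ≤ B)
    (hmono : MonotoneOn g (Iic 0)) (hanti : AntitoneOn g (Ici 0)) (hab : a ≤ b)
    {ι : Type*} [Fintype ι] {D : ι → Set ℝ} (hD : ∀ j, MeasurableSet (D j))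
    (hdisj : Pairwise (Function.onFun Disjoint D)) {s : ι → ℝ} (hs : ∀ j, s j ∈ Icc a b) :
    ∑ j, ∫ u in D j, g (u - s j) ≤ (∫ t, g t) + B * (b - a) := by
  have hshift : ∀ j, Integrable fun u => (D j).indicator (fun u => g (u - s j)) u :=
    fun j => (hg.comp_sub_right (s j)).indicator (hD j)
  have hB : 0 ≤ B := (hg0 0).trans (hgB 0)
  calc ∑ j, ∫ u in D j, g (u - s j)
      = ∫ u, ∑ j, (D j).indicator (fun u => g (u - s j)) u := by
        rw [integral_finsetSum _ fun j _ => hshift j]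
        exact Finset.sum_congr rfl fun j _ => (integral_indicator (hD j)).symm
    _ ≤ ∫ u, shiftEnvelope g B a b u :=
        integral_mono (integrable_finsetSum _ fun j _ => hshift j)
          (integrable_shiftEnvelope hg) fun u =>
            sum_indicator_le_of_pairwise_disjoint hdisj
              (fun j => comp_sub_le_shiftEnvelope hgB hmono hanti (hs j) u)
              (shiftEnvelope_nonneg hg0 hB u)
    _ = (∫ t, g t) + B * (b - a) := integral_shiftEnvelope hg hab

end ShiftEnvelope

noncomputable def logGammaDensity (n : ℕ) (t : ℝ) : ℝ :=
  (n : ℝ) ^ n * exp (n * (t - exp t)) / (n - 1)!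

theorem outDensity_eq_logGammaDensity (n : ℕ) {c : ℝ} (hc : 0 < 1 + c) (u : ℝ) :
    outDensity n c u = logGammaDensity n (u - log (1 + c)) := by
  have hexponent : (n : ℝ) * (u - log (1 + c) - exp (u - log (1 + c))) =
      n * u - n * exp u / (1 + c) - n * log (1 + c) := by
    rw [exp_sub, exp_log hc]; ring
  rw [outDensity, logGammaDensity, hexponent, exp_sub _ (n * log (1 + c)), exp_nat_mul, exp_log hc]
  field_simp

theorem logGammaDensity_nonneg (n : ℕ) (t : ℝ) : 0 ≤ logGammaDensity n t := by
  unfold logGammaDensity; positivity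

theorem monotoneOn_logGammaDensity (n : ℕ) : MonotoneOn (logGammaDensity n) (Iic 0) := by
  have hexponent : MonotoneOn (fun t : ℝ => t - exp t) (Iic 0) := by
    refine monotoneOn_of_deriv_nonneg (convex_Iic 0) (by fun_prop) (by fun_prop) fun t ht => ?_
    rw [interior_Iic, mem_Iio] at ht
    simp [exp_le_one_iff.2 ht.le]
  intro s hs t ht hst
  unfold logGammaDensity
  gcongr (n : ℝ) ^ n * exp (n * ?_) / _
  exact hexponent hs ht hst

theorem antitoneOn_logGammaDensity (n : ℕ) : AntitoneOn (logGammaDensity n) (Ici 0) := by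
  have hexponent : AntitoneOn (fun t : ℝ => t - exp t) (Ici 0) := by
    refine antitoneOn_of_deriv_nonpos (convex_Ici 0) (by fun_prop) (by fun_prop) fun t ht => ?_
    rw [interior_Ici, mem_Ioi] at ht
    simp [one_le_exp ht.le]
  intro s hs t ht hst
  unfold logGammaDensity
  gcongr (n : ℝ) ^ n * exp (n * ?_) / _
  exact hexponent hs ht hst

theorem pow_mul_exp_neg_le_sqrt_mul_factorial {n : ℕ} (hn : n ≠ 0) :
    (n : ℝ) ^ n * exp (-n) ≤ √(n / (2 * π)) * (n - 1)! := by
  have hsqrt : √(2 * π * n) * √(n / (2 * π)) = n := by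
    rw [← sqrt_mul (by positivity),
      show 2 * π * n * (n / (2 * π)) = (n : ℝ) ^ 2 by field_simp,
      sqrt_sq n.cast_nonneg]
  have hstirling := Stirling.le_factorial_stirling n
  rw [← Nat.mul_factorial_pred hn, div_pow, ← exp_nat_mul, mul_one, Nat.cast_mul] at hstirling
  refine le_of_mul_le_mul_left ?_ (by positivity : 0 < √(2 * π * n))
  calc √(2 * π * n) * (n ^ n * exp (-n)) = √(2 * π * n) * (n ^ n / exp n) := by
        rw [exp_neg, div_eq_mul_inv]
    _ ≤ n * (n - 1)! := hstirling
    _ = √(2 * π * n) * (√(n / (2 * π)) * (n - 1)!) := by rw [← mul_assoc, hsqrt]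

theorem logGammaDensity_le {n : ℕ} (hn : n ≠ 0) (t : ℝ) :
    logGammaDensity n t ≤ √(n / (2 * π)) := by
  have hmax : (n : ℝ) * (t - exp t) ≤ -n := by
    nlinarith [add_one_le_exp t, (n.cast_nonneg : (0 : ℝ) ≤ n)]
  rw [logGammaDensity, div_le_iff₀ (by positivity)]
  calc (n : ℝ) ^ n * exp (n * (t - exp t)) ≤ n ^ n * exp (-n) := by gcongr
    _ ≤ √(n / (2 * π)) * (n - 1)! := pow_mul_exp_neg_le_sqrt_mul_factorial hn

theorem integral_exp_mul_comp_exp (g : ℝ → ℝ) :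
    ∫ t, exp t * g (exp t) = ∫ x in Ioi 0, g x := by
  rw [← range_exp, ← image_univ, integral_image_eq_integral_abs_deriv_smul MeasurableSet.univ
    (fun t _ => (hasDerivAt_exp t).hasDerivWithinAt) exp_injective.injOn, setIntegral_univ]
  simp_rw [abs_of_pos (exp_pos _), smul_eq_mul]

theorem integral_logGammaDensity {n : ℕ} (hn : n ≠ 0) : ∫ t, logGammaDensity n t = 1 := by
  have hn' : (0 : ℝ) < n := by positivity
  let gammaDensity (x : ℝ) : ℝ :=
    (n : ℝ) ^ n / (n - 1)! * (x ^ ((n : ℝ) - 1) * exp (-(n * x)))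
  have hdens : ∀ t, logGammaDensity n t = exp t * gammaDensity (exp t) := by
    intro t
    simp only [logGammaDensity, gammaDensity, ← exp_mul]
    rw [mul_left_comm, ← mul_assoc (exp t), ← exp_add, ← exp_add]
    ring_nf
  have hgamma : Gamma n = (n - 1)! := by
    rw [← Gamma_nat_eq_factorial, Nat.cast_pred (Nat.pos_of_ne_zero hn), sub_add_cancel]
  simp_rw [hdens]
  rw [integral_exp_mul_comp_exp, integral_const_mul,
    integral_rpow_mul_exp_neg_mul_Ioi hn' hn', hgamma, rpow_natCast, one_div, inv_pow]
  field_simp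

theorem integrable_logGammaDensity {n : ℕ} (hn : n ≠ 0) : Integrable (logGammaDensity n) :=
  Integrable.of_integral_ne_zero (by rw [integral_logGammaDensity hn]; exact one_ne_zero)

theorem success_probability_upper_bound_general (n M : ℕ) (hn : 0 < n) (hM : 1 ≤ M)
    (ρ : ℝ)
    (c : Fin M → ℝ) (hc0 : ∀ j, 0 ≤ c j)
    (hpow : (1 / (M : ℝ)) * ∑ j, c j ≤ ρ)
    (D : Fin M → Set ℝ) (hDm : ∀ j, MeasurableSet (D j))
    (hdisj : Pairwise (Function.onFun Disjoint D)) :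
    (1 / (M : ℝ)) * ∑ j, ∫ u in D j, outDensity n (c j) u ≤
      (1 / (M : ℝ)) * (1 + Real.sqrt ((n : ℝ) / (2 * Real.pi)) *
        Real.log (1 + M * ρ)) := by
  have hsum : ∑ j, c j ≤ M * ρ := by
    rwa [one_div_mul_eq_div, div_le_iff₀' (by exact_mod_cast hM)] at hpow
  have hshift : ∀ j, log (1 + c j) ∈ Icc 0 (log (1 + M * ρ)) := fun j =>
    ⟨log_nonneg (by linarith [hc0 j]), log_le_log (by linarith [hc0 j])
      (by linarith [Finset.single_le_sum (fun i _ => hc0 i) (Finset.mem_univ j)])⟩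
  have hbound := sum_setIntegral_comp_sub_le (logGammaDensity_nonneg n)
    (integrable_logGammaDensity hn.ne') (logGammaDensity_le hn.ne')
    (monotoneOn_logGammaDensity n) (antitoneOn_logGammaDensity n)
    ((hshift ⟨0, hM⟩).1.trans (hshift ⟨0, hM⟩).2) hDm hdisj hshift
  rw [integral_logGammaDensity hn.ne', sub_zero] at hbound
  have hdens : ∀ j, ∫ u in D j, outDensity n (c j) u =
      ∫ u in D j, logGammaDensity n (u - log (1 + c j)) := fun j => by
    simp_rw [outDensity_eq_logGammaDensity n (by linarith [hc0 j] : 0 < 1 + c j)]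
  simp_rw [hdens]
  exact mul_le_mul_of_nonneg_left hbound (by positivity)

/-- For any `M` codewords `c₁ ≤ … ≤ c_M` in `[0,∞)` with average power at most `ρ`,
and any (in particular the maximum-likelihood) decoder with disjoint measurable
decoding sets `D j`, the average probability of successful decoding satisfies
`1 - ε' ≤ (1/M)(1 + √(n/(2π)) ln(1+Mρ))`. -/
theorem success_probability_upper_bound (n M : ℕ) (hn : 0 < n) (hM : 1 ≤ M)
    (ρ : ℝ) (hρ : 0 < ρ)
    (c : Fin M → ℝ) (hc0 : ∀ j, 0 ≤ c j) (hmono : Monotone c)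
    (hpow : (1 / (M : ℝ)) * ∑ j, c j ≤ ρ)
    (D : Fin M → Set ℝ) (hDm : ∀ j, MeasurableSet (D j))
    (hdisj : Pairwise (Function.onFun Disjoint D)) :
    (1 / (M : ℝ)) * ∑ j, ∫ u in D j, outDensity n (c j) u ≤
      (1 / (M : ℝ)) * (1 + Real.sqrt ((n : ℝ) / (2 * Real.pi)) *
        Real.log (1 + M * ρ)) :=
  success_probability_upper_bound_general n M hn hM ρ c hc0 hpow D hDm hdisj
end

section
/- Let G be a nonnegative random variable, k, ρ > 0, g_th and p* as in the truncated channel inversion policy (P*(Π = 1/(kg)|G=g) = p*(g), P*(Π=0|G=g) = 1−p*(g)). Suppose P_{Π|G} is any conditional distribution with Ê := E[max(1−kΠG,0)] strictly smaller than ε* := P[G < g_th] + (1−p*(g_th))·P[G = g_th]. Then E[Π] > ρ, i.e., the long-term power constraint is violated; in fact E[Π] − ρ ≥ (ε* − Ê)/(k·g_th) > 0. -/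
/-!
Write `m = max (1 - kπg) 0`, so that `kπg + m ≥ 1` pointwise. For `g ≤ g_th` this gives
`1 ≤ k g_th π + m`, and for `g > g_th` it gives `g_th / g ≤ (g_th / g)(kπg + m) ≤ k g_th π + m`.
Integrating, `g_th E[G⁻¹; G > g_th] + P[G ≤ g_th] ≤ k g_th E[Π] + Ê`. The choice of `p*` turns
the first term into `k g_th ρ - p* P[G = g_th]`, and what remains is `ε* - Ê ≤ k g_th (E[Π] - ρ)`.
-/

open MeasureTheory

lemma threshold_inversion_le {k π g t : ℝ} (hk : 0 ≤ k) (hπ : 0 ≤ π) (ht : 0 < t) :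
    t * (if t < g then g⁻¹ else 0) + (if g ≤ t then 1 else 0)
      ≤ k * t * π + max (1 - k * π * g) 0 := by
  set m := max (1 - k * π * g) 0
  have hm : 1 ≤ k * π * g + m := by linarith [le_max_left (1 - k * π * g) 0]
  have hm0 : 0 ≤ m := le_max_right _ _
  split_ifs with hgt hle hle
  · exact absurd hle (not_le.2 hgt)
  · have hg0 : 0 < g := ht.trans hgt
    have hr : t * g⁻¹ ≤ 1 := by rw [← div_eq_mul_inv, div_le_one hg0]; exact hgt.le
    calc t * g⁻¹ + 0 ≤ t * g⁻¹ * (k * π * g + m) := by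
          rw [add_zero]; exact le_mul_of_one_le_right (by positivity) hm
      _ = k * t * π + t * g⁻¹ * m := by field_simp
      _ ≤ k * t * π + m := by gcongr; exact mul_le_of_le_one_left hm0 hr
  · have := mul_le_mul_of_nonneg_left hle (mul_nonneg hk hπ)
    linarith
  · exact absurd (not_lt.1 hgt) hle

section

variable {Ω : Type*} [MeasurableSpace Ω] {P : Measure Ω} {G : Ω → ℝ}

lemma integrable_inv_of_gt [IsFiniteMeasure P] (hG : Measurable G) {t : ℝ} (ht : 0 < t) :
    Integrable (fun ω => if t < G ω then (G ω)⁻¹ else 0) P := by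
  refine (integrable_const t⁻¹).mono'
    (Measurable.ite (measurableSet_lt measurable_const hG) hG.inv measurable_const).aestronglyMeasurable
    (ae_of_all _ fun ω => ?_)
  split_ifs with h
  · rw [Real.norm_eq_abs, abs_of_pos (inv_pos.2 (ht.trans h))]
    exact inv_anti₀ ht h.le
  · simpa using ht.le

lemma integrable_max_one_sub_mul [IsFiniteMeasure P] {Pi : Ω → ℝ} (hG : Measurable G)
    (hPi : AEStronglyMeasurable Pi P) (hG0 : ∀ ω, 0 ≤ G ω) (hP0 : ∀ ω, 0 ≤ Pi ω) {k : ℝ}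
    (hk : 0 ≤ k) :
    Integrable (fun ω => max (1 - k * Pi ω * G ω) 0) P := by
  refine (integrable_const (1 : ℝ)).mono'
    ((aestronglyMeasurable_const.sub
      ((aestronglyMeasurable_const.mul hPi).mul hG.aestronglyMeasurable)).sup
      aestronglyMeasurable_const) (ae_of_all _ fun ω => ?_)
  rw [Real.norm_eq_abs, abs_of_nonneg (le_max_right _ _)]
  exact max_le (by linarith [mul_nonneg (mul_nonneg hk (hP0 ω)) (hG0 ω)]) zero_le_one

lemma measureReal_le_eq_lt_add_eq [IsFiniteMeasure P] (hG : Measurable G) (t : ℝ) :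
    P.real {ω | G ω ≤ t} = P.real {ω | G ω < t} + P.real {ω | G ω = t} := by
  have hu : {ω | G ω ≤ t} = {ω | G ω < t} ∪ {ω | G ω = t} := by
    ext ω; simp [le_iff_lt_or_eq]
  rw [hu]
  exact measureReal_union (Set.disjoint_left.2 fun _ h1 h2 => h1.ne h2)
    (hG (measurableSet_singleton t))

lemma integral_threshold_inversion_le [IsFiniteMeasure P] {Pi : Ω → ℝ} (hG : Measurable G)
    (hG0 : ∀ ω, 0 ≤ G ω) (hP0 : ∀ ω, 0 ≤ Pi ω) (hPi : Integrable Pi P) {k t : ℝ}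
    (hk : 0 ≤ k) (ht : 0 < t) :
    t * (∫ ω, (if t < G ω then (G ω)⁻¹ else 0) ∂P) + P.real {ω | G ω ≤ t}
      ≤ k * t * (∫ ω, Pi ω ∂P) + ∫ ω, max (1 - k * Pi ω * G ω) 0 ∂P := by
  have hA := integrable_inv_of_gt (P := P) hG ht
  have hM := integrable_max_one_sub_mul hG hPi.aestronglyMeasurable hG0 hP0 hk
  have hle : MeasurableSet {ω | G ω ≤ t} := measurableSet_le hG measurable_const
  have hpt : ∀ ω, t * (if t < G ω then (G ω)⁻¹ else 0) + {ω | G ω ≤ t}.indicator 1 ω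
      ≤ k * t * Pi ω + max (1 - k * Pi ω * G ω) 0 := fun ω => by
    simpa [Set.indicator_apply] using threshold_inversion_le hk (hP0 ω) ht
  have hI : Integrable ({ω | G ω ≤ t}.indicator (1 : Ω → ℝ)) P := (integrable_const 1).indicator hle
  have h : ∫ ω, (t * (if t < G ω then (G ω)⁻¹ else 0) + {ω | G ω ≤ t}.indicator 1 ω) ∂P
      ≤ ∫ ω, (k * t * Pi ω + max (1 - k * Pi ω * G ω) 0) ∂P :=
    integral_mono ((hA.const_mul t).add hI) ((hPi.const_mul (k * t)).add hM) hpt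
  rwa [integral_add (hA.const_mul t) hI,
    integral_add (hPi.const_mul (k * t)) hM, integral_const_mul, integral_const_mul,
    integral_indicator_one hle] at h

end

theorem power_constraint_violated_general {Ω : Type*} [MeasurableSpace Ω]
    (P : Measure Ω) [IsProbabilityMeasure P]
    (G Pi : Ω → ℝ) (hGm : Measurable G)
    (hG0 : ∀ ω, 0 ≤ G ω) (hP0 : ∀ ω, 0 ≤ Pi ω) (hPint : Integrable Pi P)
    (k ρ : ℝ) (hk : 0 < k)
    (gth : ℝ)
    (hgth_pos : 0 < gth)
    (pstar : ℝ)
    -- `p*(g_th)` is chosen so that truncated channel inversion meets the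
    -- power budget with equality: `E[Π*] = ρ`
    (hpstar : ρ * k = (∫ ω, (if gth < G ω then (G ω)⁻¹ else 0) ∂P) +
      pstar * (P {ω | G ω = gth}).toReal / gth)
    (εstar εhat : ℝ)
    (hεstar : εstar = (P {ω | G ω < gth}).toReal +
      (1 - pstar) * (P {ω | G ω = gth}).toReal)
    (hεhat : εhat = ∫ ω, max (1 - k * Pi ω * G ω) 0 ∂P)
    (hlt : εhat < εstar) :
    (∫ ω, Pi ω ∂P) - ρ ≥ (εstar - εhat) / (k * gth) ∧ ρ < ∫ ω, Pi ω ∂P := by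
  have hkg : 0 < k * gth := mul_pos hk hgth_pos
  have hint := integral_threshold_inversion_le hGm hG0 hP0 hPint hk.le hgth_pos
  rw [measureReal_le_eq_lt_add_eq hGm] at hint
  simp only [measureReal_def] at hint
  have hbudget : ρ * k * gth = gth * (∫ ω, (if gth < G ω then (G ω)⁻¹ else 0) ∂P)
      + pstar * (P {ω | G ω = gth}).toReal := by
    rw [hpstar]; field_simp
  have hgap : εstar - εhat ≤ ((∫ ω, Pi ω ∂P) - ρ) * (k * gth) := by
    rw [hεstar, hεhat]; linarith
  have hbound : (εstar - εhat) / (k * gth) ≤ (∫ ω, Pi ω ∂P) - ρ := (div_le_iff₀ hkg).2 hgap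
  exact ⟨hbound, by linarith [div_pos (sub_pos.2 hlt) hkg]⟩

/-- If a power policy `Π` achieves `E[max(1-kΠG,0)]` strictly smaller than the
value `ε* = P[G < g_th] + (1 - p*(g_th)) P[G = g_th]` attained by truncated
channel inversion, then it must violate the long-term power constraint:
`E[Π] - ρ ≥ (ε* - Ê)/(k g_th) > 0`. -/
theorem power_constraint_violated {Ω : Type*} [MeasurableSpace Ω]
    (P : Measure Ω) [IsProbabilityMeasure P]
    (G Pi : Ω → ℝ) (hGm : Measurable G) (hPm : Measurable Pi)
    (hG0 : ∀ ω, 0 ≤ G ω) (hP0 : ∀ ω, 0 ≤ Pi ω) (hPint : Integrable Pi P)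
    (k ρ : ℝ) (hk : 0 < k) (hρ : 0 < ρ)
    (gth : ℝ)
    (hgth : gth = sInf {t : ℝ | 0 < t ∧
      (∫ ω, (if t ≤ G ω then 1 / (k * G ω) else 0) ∂P) ≤ ρ})
    (hgth_pos : 0 < gth)
    (pstar : ℝ)
    -- `p*(g_th)` is chosen so that truncated channel inversion meets the
    -- power budget with equality: `E[Π*] = ρ`
    (hpstar : ρ * k = (∫ ω, (if gth < G ω then (G ω)⁻¹ else 0) ∂P) +
      pstar * (P {ω | G ω = gth}).toReal / gth)
    (εstar εhat : ℝ)
    (hεstar : εstar = (P {ω | G ω < gth}).toReal +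
      (1 - pstar) * (P {ω | G ω = gth}).toReal)
    (hεhat : εhat = ∫ ω, max (1 - k * Pi ω * G ω) 0 ∂P)
    (hlt : εhat < εstar) :
    (∫ ω, Pi ω ∂P) - ρ ≥ (εstar - εhat) / (k * gth) ∧ ρ < ∫ ω, Pi ω ∂P :=
  power_constraint_violated_general P G Pi hGm hG0 hP0 hPint k ρ hk gth hgth_pos pstar hpstar εstar
    εhat hεstar hεhat hlt
end
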